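/- arXiv:1510.05207 — 2 statements merged into one kernel-verified Lean document; each statement's English description precedes it below -/
import Mathlib

section
/- An even-order strictly diagonally dominant real symmetric tensor with all positive diagonal entries is positive definite. -/
open Finset

/-- off-diagonal row sum r_i(A) for a real tensor of order k+1, dimension n -/
noncomputable def rT {n k : ℕ} (A : (Fin (k+1) → Fin n) → ℝ) (i : Fin n) : ℝ :=
  ∑ α ∈ Finset.univ.filter (fun α : Fin k → Fin n => α ≠ fun _ => i),
    |A (Fin.cons i α)|

/-- r_i^j(A) = r_i(A) - |a_{ij...j}| -/
noncomputable def rTj {n k : ℕ} (A : (Fin (k+1) → Fin n) → ℝ) (i j : Fin n) : ℝ :=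
  rT A i - |A (Fin.cons i fun _ => j)|

/-- r_j^{Δ^S}(A): sum over index tuples all lying in S, excluding the diagonal tuple -/
noncomputable def rDelta {n k : ℕ} (A : (Fin (k+1) → Fin n) → ℝ) (S : Finset (Fin n))
    (j : Fin n) : ℝ :=
  ∑ α ∈ Finset.univ.filter (fun α : Fin k → Fin n => (∀ l, α l ∈ S) ∧ α ≠ fun _ => j),
    |A (Fin.cons j α)|

/-- r_j^{Δ^S-complement}(A): sum over index tuples not all lying in S -/
noncomputable def rDeltaC {n k : ℕ} (A : (Fin (k+1) → Fin n) → ℝ) (S : Finset (Fin n))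
    (j : Fin n) : ℝ :=
  ∑ α ∈ Finset.univ.filter (fun α : Fin k → Fin n => ¬ (∀ l, α l ∈ S)),
    |A (Fin.cons j α)|

/-- the tensor is symmetric: entries invariant under permutations of all indices -/
def SymTensor {n k : ℕ} (A : (Fin (k+1) → Fin n) → ℝ) : Prop :=
  ∀ (σ : Equiv.Perm (Fin (k+1))) (f : Fin (k+1) → Fin n), A (f ∘ σ) = A f

/-- λ is an H-eigenvalue of the real tensor A -/
def IsHEig {n k : ℕ} (A : (Fin (k+1) → Fin n) → ℝ) (lam : ℝ) : Prop :=
  ∃ x : Fin n → ℝ, x ≠ 0 ∧ ∀ i,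
    (∑ α : Fin k → Fin n, A (Fin.cons i α) * ∏ l, x (α l)) = lam * (x i) ^ k

/-!
Gershgorin argument: evaluate the eigen-equation `A x^{m-1} = λ x^{[m-1]}` at an index `i` where
`|x i|` is maximal. Every off-diagonal monomial is then bounded by `|x i| ^ (m-1)`, so
`|λ - a_{i…i}| ≤ r_i(A)`, and strict diagonal dominance forces `λ ≥ a_{i…i} - r_i(A) > 0`.
-/

lemma Fin.cons_const {n k : ℕ} (i : Fin n) :
    (Fin.cons i (fun _ => i) : Fin (k+1) → Fin n) = fun _ => i := by
  funext a
  cases a using Fin.cases <;> simp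

lemma sum_cons_mul_prod_eq_diag_add_offDiag {n k : ℕ} (A : (Fin (k+1) → Fin n) → ℝ)
    (x : Fin n → ℝ) (i : Fin n) :
    ∑ α : Fin k → Fin n, A (Fin.cons i α) * ∏ l, x (α l)
      = A (fun _ => i) * x i ^ k
        + ∑ α ∈ univ.filter (fun α : Fin k → Fin n => α ≠ fun _ => i),
            A (Fin.cons i α) * ∏ l, x (α l) := by
  rw [filter_ne', ← add_sum_erase _ _ (mem_univ _), Fin.cons_const, prod_const, card_univ,
    Fintype.card_fin]

lemma abs_sum_offDiag_le_rT_mul {n k : ℕ} (A : (Fin (k+1) → Fin n) → ℝ) (x : Fin n → ℝ)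
    (i : Fin n) (hmax : ∀ j, |x j| ≤ |x i|) :
    |∑ α ∈ univ.filter (fun α : Fin k → Fin n => α ≠ fun _ => i),
        A (Fin.cons i α) * ∏ l, x (α l)| ≤ rT A i * |x i| ^ k := by
  rw [rT, sum_mul]
  refine (abs_sum_le_sum_abs _ _).trans (sum_le_sum fun α _ => ?_)
  rw [abs_mul, abs_prod]
  gcongr
  calc ∏ l, |x (α l)| ≤ ∏ _l : Fin k, |x i| := prod_le_prod (fun _ _ => abs_nonneg _)
        (fun l _ => hmax (α l))
    _ = |x i| ^ k := by rw [prod_const, card_univ, Fintype.card_fin]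

theorem IsHEig.exists_abs_sub_diag_le_rT {n k : ℕ} {A : (Fin (k+1) → Fin n) → ℝ} {lam : ℝ}
    (h : IsHEig A lam) : ∃ i, |lam - A (fun _ => i)| ≤ rT A i := by
  obtain ⟨x, hx0, heig⟩ := h
  obtain ⟨j, hj⟩ := Function.ne_iff.mp hx0
  obtain ⟨i, -, hmax⟩ := exists_max_image univ (fun i => |x i|) ⟨j, mem_univ j⟩
  have hxi_pos : 0 < |x i| ^ k :=
    pow_pos ((abs_pos.mpr hj).trans_le (hmax j (mem_univ j))) k
  refine ⟨i, le_of_mul_le_mul_right ?_ hxi_pos⟩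
  have hoff := abs_sum_offDiag_le_rT_mul A x i fun j => hmax j (mem_univ j)
  have hrow := heig i
  rw [sum_cons_mul_prod_eq_diag_add_offDiag] at hrow
  rwa [eq_sub_of_add_eq' hrow, ← sub_mul, abs_mul, abs_pow] at hoff

theorem stmt15_general {n k : ℕ}
    (A : (Fin (k+1) → Fin n) → ℝ)
    (hdd : ∀ i : Fin n, rT A i < A (fun _ => i)) :
    ∀ lam : ℝ, IsHEig A lam → 0 < lam := by
  intro lam hlam
  obtain ⟨i, hi⟩ := hlam.exists_abs_sub_diag_le_rT
  have := neg_abs_le (lam - A (fun _ => i))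
  linarith [hdd i]

theorem stmt15 {n k : ℕ} (hm : Even (k+1))
    (A : (Fin (k+1) → Fin n) → ℝ) (hsym : SymTensor A)
    (hdiag : ∀ i : Fin n, 0 < A (fun _ => i))
    (hdd : ∀ i : Fin n, rT A i < A (fun _ => i)) :
    ∀ lam : ℝ, IsHEig A lam → 0 < lam :=
  stmt15_general A hdd
end

section
/- An even-order quasi-doubly strictly diagonally dominant real symmetric tensor with all positive diagonal entries is positive definite. -/
open Finset

/-! Let `t` maximise `|x i|` and let `s ≠ t` be arbitrary; write `R + B = r_t` with
`B = |a_{ts…s}|`. Splitting the term `α = (s,…,s)` off row `t` of `A xᵏ = λ x^[k]` gives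
`(a_t - λ - R) |x_t|ᵏ ≤ B |x_s|ᵏ`, and row `s` gives `(a_s - λ) |x_s|ᵏ ≤ r_s |x_t|ᵏ`.
If `λ ≤ 0`, multiplying the two contradicts `r_s B < (a_t - R) a_s`, which is the
quasi-double diagonal dominance for the pair `(t, s)`. -/

lemma Fin.cons_self_const {n k : ℕ} (i : Fin n) :
    (Fin.cons i fun _ : Fin k => i : Fin (k+1) → Fin n) = fun _ => i := by
  funext l; exact Fin.cases rfl (fun _ => rfl) l

lemma prod_abs_le_pow {n k : ℕ} (x : Fin n → ℝ) (u : ℝ) (hu : ∀ j, |x j| ≤ u)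
    (α : Fin k → Fin n) : ∏ l, |x (α l)| ≤ u ^ k := by
  calc ∏ l, |x (α l)| ≤ ∏ _l : Fin k, u :=
        prod_le_prod (fun _ _ => abs_nonneg _) (fun l _ => hu (α l))
    _ = u ^ k := by simp

section TensorRows

variable {n k : ℕ} (A : (Fin (k+1) → Fin n) → ℝ) (x : Fin n → ℝ)

lemma sum_cons_mul_prod_eq_diag_add (i : Fin n) :
    ∑ α : Fin k → Fin n, A (Fin.cons i α) * ∏ l, x (α l)
      = A (fun _ => i) * x i ^ k
        + ∑ α ∈ univ.filter (fun α : Fin k → Fin n => α ≠ fun _ => i),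
            A (Fin.cons i α) * ∏ l, x (α l) := by
  rw [← sum_filter_add_sum_filter_not univ (fun α : Fin k → Fin n => α = fun _ => i),
    filter_eq', if_pos (mem_univ _), sum_singleton, Fin.cons_self_const]
  simp

lemma abs_sub_diag_mul_pow_le {lam : ℝ}
    (heig : ∀ i, ∑ α : Fin k → Fin n, A (Fin.cons i α) * ∏ l, x (α l) = lam * x i ^ k)
    (i : Fin n) :
    |lam - A (fun _ => i)| * |x i| ^ k
      ≤ ∑ α ∈ univ.filter (fun α : Fin k → Fin n => α ≠ fun _ => i),
          |A (Fin.cons i α)| * ∏ l, |x (α l)| := by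
  have hrow := heig i
  rw [sum_cons_mul_prod_eq_diag_add] at hrow
  calc |lam - A (fun _ => i)| * |x i| ^ k = |(lam - A (fun _ => i)) * x i ^ k| := by
        rw [abs_mul, abs_pow]
    _ = |∑ α ∈ univ.filter (fun α : Fin k → Fin n => α ≠ fun _ => i),
          A (Fin.cons i α) * ∏ l, x (α l)| := by
        rw [sub_mul, ← hrow, add_sub_cancel_left]
    _ ≤ _ := by
        refine (abs_sum_le_sum_abs _ _).trans_eq (sum_congr rfl fun α _ => ?_)
        rw [abs_mul, abs_prod]

variable {x} {u : ℝ}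

lemma sum_offDiag_le_rT_mul_pow (hu : ∀ j, |x j| ≤ u) (i : Fin n) :
    ∑ α ∈ univ.filter (fun α : Fin k → Fin n => α ≠ fun _ => i),
        |A (Fin.cons i α)| * ∏ l, |x (α l)| ≤ rT A i * u ^ k := by
  rw [rT, sum_mul]
  exact sum_le_sum fun α _ =>
    mul_le_mul_of_nonneg_left (prod_abs_le_pow x u hu α) (abs_nonneg _)

lemma sum_offDiag_le_of_ne_const (hu : ∀ j, |x j| ≤ u) (i : Fin n) {β : Fin k → Fin n}
    (hβ : β ≠ fun _ => i) :
    ∑ α ∈ univ.filter (fun α : Fin k → Fin n => α ≠ fun _ => i),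
        |A (Fin.cons i α)| * ∏ l, |x (α l)|
      ≤ (rT A i - |A (Fin.cons i β)|) * u ^ k + |A (Fin.cons i β)| * ∏ l, |x (β l)| := by
  have hβS : β ∈ univ.filter (fun α : Fin k → Fin n => α ≠ fun _ => i) := by simpa using hβ
  rw [← add_sum_erase _ _ hβS, add_comm, rT, ← sum_erase_add _ _ hβS, add_sub_cancel_right,
    sum_mul]
  gcongr with α
  exact prod_abs_le_pow x u hu α

end TensorRows

lemma pos_of_row_bounds {lam dt ds R B rs U V : ℝ} (hds : 0 < ds)
    (hB : 0 ≤ B) (hrs : 0 ≤ rs) (hU : 0 < U) (hV : 0 ≤ V)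
    (hqdd : rs * B < (dt - R) * ds)
    (hrow_t : |lam - dt| * U ≤ R * U + B * V) (hrow_s : |lam - ds| * V ≤ rs * U) :
    0 < lam := by
  by_contra! hlam
  have hgap : 0 < dt - R := by nlinarith [mul_nonneg hrs hB]
  have ht : (dt - R - lam) * U ≤ B * V := by
    nlinarith [le_abs_self (dt - lam), abs_sub_comm lam dt]
  have hs : (ds - lam) * V ≤ rs * U := by
    nlinarith [le_abs_self (ds - lam), abs_sub_comm lam ds]
  have hVpos : 0 < V := by
    by_contra! hV0
    nlinarith [le_antisymm hV0 hV]
  have hcoef : rs * B < (dt - R - lam) * (ds - lam) := by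
    nlinarith [mul_le_mul_of_nonneg_left (neg_nonneg.2 hlam) hgap.le]
  nlinarith [mul_le_mul ht hs (mul_nonneg (by linarith) hV) (mul_nonneg hB hV),
    mul_lt_mul_of_pos_right hcoef (mul_pos hU hVpos)]

theorem stmt16_general {n k : ℕ} (hn : 2 ≤ n) (hm : Even (k+1))
    (A : (Fin (k+1) → Fin n) → ℝ)
    (hdiag : ∀ i : Fin n, 0 < A (fun _ => i))
    (hqdd : ∀ i j : Fin n, i ≠ j →
      rT A j * |A (Fin.cons i fun _ => j)| <
        (|A (fun _ => i)| - rTj A i j) * |A (fun _ => j)|) :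
    ∀ lam : ℝ, IsHEig A lam → 0 < lam := by
  rintro lam ⟨x, hx0, heig⟩
  have hk : k ≠ 0 := by rintro rfl; simp at hm
  have : Nonempty (Fin n) := ⟨⟨0, by omega⟩⟩
  obtain ⟨t, -, ht⟩ := exists_max_image univ (fun i => |x i|) univ_nonempty
  replace ht : ∀ i, |x i| ≤ |x t| := fun i => ht i (mem_univ i)
  obtain ⟨s, hst⟩ := Fintype.exists_ne_of_one_lt_card (by rw [Fintype.card_fin]; exact hn) t
  have hxt : 0 < |x t| := by
    obtain ⟨i, hi⟩ := Function.ne_iff.mp hx0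
    exact (abs_pos.mpr hi).trans_le (ht i)
  have hconst : (fun _ : Fin k => s) ≠ fun _ => t := fun h =>
    hst (congrFun h ⟨0, Nat.pos_of_ne_zero hk⟩)
  have hrow_t := (abs_sub_diag_mul_pow_le A x heig t).trans
    (sum_offDiag_le_of_ne_const A ht t hconst)
  have hrow_s := (abs_sub_diag_mul_pow_le A x heig s).trans
    (sum_offDiag_le_rT_mul_pow A ht s)
  have hq := hqdd t s hst.symm
  rw [abs_of_pos (hdiag t), abs_of_pos (hdiag s), rTj] at hq
  simp only [prod_const, card_univ, Fintype.card_fin] at hrow_t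
  exact pos_of_row_bounds (hdiag s) (abs_nonneg _) (sum_nonneg fun _ _ => abs_nonneg _)
    (pow_pos hxt k) (pow_nonneg (abs_nonneg _) k) hq hrow_t hrow_s

theorem stmt16 {n k : ℕ} (hn : 2 ≤ n) (hm : Even (k+1))
    (A : (Fin (k+1) → Fin n) → ℝ) (hsym : SymTensor A)
    (hdiag : ∀ i : Fin n, 0 < A (fun _ => i))
    (hqdd : ∀ i j : Fin n, i ≠ j →
      rT A j * |A (Fin.cons i fun _ => j)| <
        (|A (fun _ => i)| - rTj A i j) * |A (fun _ => j)|) :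
    ∀ lam : ℝ, IsHEig A lam → 0 < lam :=
  stmt16_general hn hm A hdiag hqdd
end
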